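/- arXiv:2403.16228 — 3 statements merged into one kernel-verified Lean document; each statement's English description precedes it below -/
import Mathlib

section
/- Under Assumption (S), a Borel measurable function I : (0,∞) → ℝ, for which all integrals below are well defined and finite, satisfies I(y·Φ₊'(q₀)) + ∫_{q₀}^1 I(y·Φ₊'(η))·Φ₊'(η)/(q₀·Φ₊'(q₀)) dη = I₀(y)/(q₀·Φ₊'(q₀)) for every y > 0 if and only if it satisfies the linear Volterra integral equation I(t) = (1/(q₀·Φ₊'(q₀)))·I₀(t/Φ₊'(q₀)) + ∫₀ᵗ I(s)·k(t,s) ds for every t > 0. -/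
open MeasureTheory Set

/-!
Substituting `s = y Φ₊'(η)` (so `ds = y Φ₊''(η) dη`, and `s` runs from `t = y Φ₊'(q₀)` down
to `0`) turns the integral over `η ∈ [q₀, 1]` into `-∫₀ᵗ I(s) k(t, s) ds`: the kernel `k` is
exactly the Jacobian factor of this substitution, since `(Φ₊')⁻¹(Φ₊'(q₀) s / t) = η`. Since
`y ↦ y Φ₊'(q₀)` is a bijection of `(0, ∞)`, the two equations are then the same family of
identities.
-/

theorem strictAntiOn_Icc_of_hasDerivWithinAt_neg {f f' : ℝ → ℝ} {a b : ℝ}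
    (hf : ∀ x ∈ Icc a b, HasDerivWithinAt f (f' x) (Icc a b) x)
    (hf' : ∀ x ∈ Ioo a b, f' x < 0) : StrictAntiOn f (Icc a b) := by
  refine strictAntiOn_of_hasDerivWithinAt_neg (f' := f') (convex_Icc a b)
    (fun x hx => (hf x hx).continuousWithinAt) ?_ ?_ <;> rw [interior_Icc]
  · exact fun x hx => (hf x (Ioo_subset_Icc_self hx)).mono Ioo_subset_Icc_self
  · exact hf'

theorem integral_comp_deriv_eq_neg_integral_kernel {q₀ : ℝ} (hq₀1 : q₀ < 1)
    {DΦp DDΦp Dinv : ℝ → ℝ} {k : ℝ → ℝ → ℝ}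
    (hD : ∀ q ∈ Icc q₀ 1, HasDerivWithinAt DΦp (DDΦp q) (Icc q₀ 1) q)
    (hDD : ∀ q ∈ Icc q₀ 1, DDΦp q < 0) (hD1 : DΦp 1 = 0)
    (hDinv : ∀ q ∈ Icc q₀ 1, Dinv (DΦp q) = q)
    (hk : ∀ t s : ℝ, 0 < s → s ≤ t →
      k t s = s * DΦp q₀ / (q₀ * t ^ 2 * DDΦp (Dinv (DΦp q₀ * s / t))))
    (I : ℝ → ℝ) {y : ℝ} (hy : 0 < y) :
    ∫ η in q₀..1, I (y * DΦp η) * DΦp η / (q₀ * DΦp q₀)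
      = -∫ s in (0 : ℝ)..y * DΦp q₀, I s * k (y * DΦp q₀) s := by
  have hanti :=
    strictAntiOn_Icc_of_hasDerivWithinAt_neg hD fun q hq => hDD q (Ioo_subset_Icc_self hq)
  have hIoo : Ioo (min q₀ 1) (max q₀ 1) = Ioo q₀ 1 := by
    rw [min_eq_left hq₀1.le, max_eq_right hq₀1.le]
  have hcov := intervalIntegral.integral_comp_mul_deriv_of_deriv_nonpos
    (f := fun η => y * DΦp η) (f' := fun η => y * DDΦp η)
    (g := fun s => I s * k (y * DΦp q₀) s)
    (by
      rw [uIcc_of_le hq₀1.le]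
      exact continuousOn_const.mul fun q hq => (hD q hq).continuousWithinAt)
    (by
      rw [hIoo]
      exact fun q hq =>
        ((hD q (Ioo_subset_Icc_self hq)).hasDerivAt (Icc_mem_nhds hq.1 hq.2)).const_mul y)
    (by
      rw [hIoo]
      exact fun q hq => (mul_neg_of_pos_of_neg hy (hDD q (Ioo_subset_Icc_self hq))).le)
  rw [← intervalIntegral.integral_symm, ← mul_zero y, ← hD1, ← hcov]
  -- At `η = 1` the substitution hits `s = 0`, where `hk` says nothing about `k`.
  refine intervalIntegral.integral_congr_Ioo_of_le hq₀1.le fun η hη => ?_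
  have hη' : η ∈ Icc q₀ 1 := Ioo_subset_Icc_self hη
  have hDη_pos : 0 < DΦp η := hD1 ▸ hanti hη' ⟨hq₀1.le, le_rfl⟩ hη.2
  have hDη_le : DΦp η ≤ DΦp q₀ := (hanti ⟨le_rfl, hq₀1.le⟩ hη' hη.1).le
  have hq₀_pos : 0 < DΦp q₀ := hDη_pos.trans_le hDη_le
  have hDDη : DDΦp η ≠ 0 := (hDD η hη').ne
  have hkη : k (y * DΦp q₀) (y * DΦp η)
      = y * DΦp η * DΦp q₀ / (q₀ * (y * DΦp q₀) ^ 2 * DDΦp η) := by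
    rw [hk _ _ (by positivity) (by gcongr),
      show DΦp q₀ * (y * DΦp η) / (y * DΦp q₀) = DΦp η by field_simp, hDinv η hη']
  simp only [Function.comp_apply, hkη]
  field_simp

theorem forall_pos_mul_iff {c : ℝ} (hc : 0 < c) {P : ℝ → Prop} :
    (∀ y > 0, P (y * c)) ↔ ∀ t > 0, P t :=
  ⟨fun h t ht => div_mul_cancel₀ t hc.ne' ▸ h (t / c) (div_pos ht hc),
    fun h y hy => h (y * c) (mul_pos hy hc)⟩

theorem stmt_0_general
    (q₀ : ℝ) (hq₀ : q₀ ∈ Set.Ioo (0:ℝ) 1)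
    (DΦp DDΦp : ℝ → ℝ)
    (hΦpD2 : ∀ q ∈ Set.Icc q₀ 1, HasDerivWithinAt DΦp (DDΦp q) (Set.Icc q₀ 1) q)
    (hconc : ∀ q ∈ Set.Icc q₀ 1, DDΦp q < 0)
    (hDΦp1 : DΦp 1 = 0)
    (Dinv : ℝ → ℝ)
    (hDinv : ∀ q ∈ Set.Icc q₀ 1, Dinv (DΦp q) = q)
    (k : ℝ → ℝ → ℝ)
    (hk : ∀ t s : ℝ, 0 < s → s ≤ t →
      k t s = s * DΦp q₀ / (q₀ * t ^ 2 * DDΦp (Dinv (DΦp q₀ * s / t))))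
    (I₀ I : ℝ → ℝ) :
    (∀ y > (0:ℝ),
        I (y * DΦp q₀)
          + ∫ η in q₀..1, I (y * DΦp η) * DΦp η / (q₀ * DΦp q₀)
        = I₀ y / (q₀ * DΦp q₀))
      ↔
    (∀ t > (0:ℝ),
        I t = (1 / (q₀ * DΦp q₀)) * I₀ (t / DΦp q₀)
          + ∫ s in (0:ℝ)..t, I s * k t s) := by
  have hDq₀ : 0 < DΦp q₀ := hDΦp1 ▸
    strictAntiOn_Icc_of_hasDerivWithinAt_neg hΦpD2 (fun q hq => hconc q (Ioo_subset_Icc_self hq))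
      ⟨le_rfl, hq₀.2.le⟩ ⟨hq₀.2.le, le_rfl⟩ hq₀.2
  refine Iff.trans ?_ (forall_pos_mul_iff hDq₀)
  refine forall₂_congr fun y hy => ?_
  rw [integral_comp_deriv_eq_neg_integral_kernel hq₀.2 hΦpD2 hconc hDΦp1 hDinv hk I hy,
    mul_div_cancel_right₀ y hDq₀.ne', one_div_mul_eq_div]
  constructor <;> intro h <;> linarith

/-- Lemma 5.1 / Lemma `lem:Volterra_S` of the paper.
Under Assumption (S), a Borel measurable function `I` (with all integrals
well defined and finite) satisfies the renormalized integral equation if and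
only if it satisfies the linear Volterra integral equation. -/
theorem stmt_0
    (q₀ : ℝ) (hq₀ : q₀ ∈ Set.Ioo (0:ℝ) 1)
    (Φp DΦp DDΦp : ℝ → ℝ)
    (hΦpD1 : ∀ q ∈ Set.Icc q₀ 1, HasDerivWithinAt Φp (DΦp q) (Set.Icc q₀ 1) q)
    (hΦpD2 : ∀ q ∈ Set.Icc q₀ 1, HasDerivWithinAt DΦp (DDΦp q) (Set.Icc q₀ 1) q)
    (hΦpD2c : ContinuousOn DDΦp (Set.Icc q₀ 1))
    (hmono : StrictMonoOn Φp (Set.Icc q₀ 1))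
    (hconc : ∀ q ∈ Set.Icc q₀ 1, DDΦp q < 0)
    (hDq₀ : 0 < DΦp q₀)
    (hval : Φp q₀ = DΦp q₀ * q₀ - 1)
    (hΦp1 : Φp 1 = 0) (hDΦp1 : DΦp 1 = 0)
    (Dinv : ℝ → ℝ)
    (hDinv : ∀ q ∈ Set.Icc q₀ 1, Dinv (DΦp q) = q)
    (hDinv' : ∀ ξ ∈ Set.Icc 0 (DΦp q₀), Dinv ξ ∈ Set.Icc q₀ 1 ∧ DΦp (Dinv ξ) = ξ)
    (k : ℝ → ℝ → ℝ)
    (hk : ∀ t s : ℝ, 0 < s → s ≤ t →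
      k t s = s * DΦp q₀ / (q₀ * t ^ 2 * DDΦp (Dinv (DΦp q₀ * s / t))))
    (I₀ I : ℝ → ℝ) (hI : Measurable I)
    (hInt1 : ∀ y > (0:ℝ),
      IntervalIntegrable (fun η => I (y * DΦp η) * DΦp η) volume q₀ 1)
    (hInt2 : ∀ t > (0:ℝ),
      IntervalIntegrable (fun s => I s * k t s) volume 0 t) :
    (∀ y > (0:ℝ),
        I (y * DΦp q₀)
          + ∫ η in q₀..1, I (y * DΦp η) * DΦp η / (q₀ * DΦp q₀)
        = I₀ y / (q₀ * DΦp q₀))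
      ↔
    (∀ t > (0:ℝ),
        I t = (1 / (q₀ * DΦp q₀)) * I₀ (t / DΦp q₀)
          + ∫ s in (0:ℝ)..t, I s * k t s) :=
  stmt_0_general q₀ hq₀ DΦp DDΦp hΦpD2 hconc hDΦp1 Dinv hDinv k hk I₀ I
end

section
/- Under Assumption (RS), a Borel measurable function I : (0,∞) → ℝ, for which all integrals below are well defined and finite, satisfies I(y·Φ₋'(q₀)) + ∫₀^{q₀} I(y·Φ₋'(η))·Φ₋'(η)/((1−q₀)·Φ₋'(q₀)) dη = I₀(y)/((1−q₀)·Φ₋'(q₀)) for every y > 0 if and only if the function J(t) := I(1/t) satisfies the linear Volterra integral equation J(t) = J₀(t) + ∫₀ᵗ J(s)·k(t,s) ds for every t > 0, where J₀(t) := (1/((1−q₀)·Φ₋'(q₀)))·I₀(1/(t·Φ₋'(q₀))). -/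
open MeasureTheory Set Filter Topology

/-- Lemma `lem:Volterra_RS`: under Assumption (RS), `I` satisfies
the renormalized integral equation iff `J(t) = I(1/t)` satisfies the linear
Volterra integral equation. -/
theorem stmt_5
    (q₀ : ℝ) (hq₀ : q₀ ∈ Set.Ioo (0:ℝ) 1)
    (Φm DΦm DDΦm : ℝ → ℝ)
    (hΦmD1 : ∀ q ∈ Set.Ioc (0:ℝ) q₀, HasDerivWithinAt Φm (DΦm q) (Set.Ioc 0 q₀) q)
    (hΦmD2 : ∀ q ∈ Set.Ioc (0:ℝ) q₀, HasDerivWithinAt DΦm (DDΦm q) (Set.Ioc 0 q₀) q)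
    (hΦmD2c : ContinuousOn DDΦm (Set.Ioc 0 q₀))
    (hmono : StrictMonoOn Φm (Set.Ioc 0 q₀))
    (hconc : ∀ q ∈ Set.Ioc (0:ℝ) q₀, DDΦm q < 0)
    (hDq₀ : 0 < DΦm q₀)
    (hval : Φm q₀ = DΦm q₀ * (q₀ - 1))
    (hlim0 : Tendsto Φm (𝓝[>] 0) (𝓝 (-1)))
    (hlimD : Tendsto DΦm (𝓝[>] 0) atTop)
    (Dinv : ℝ → ℝ)
    (hDinv : ∀ q ∈ Set.Ioc (0:ℝ) q₀, Dinv (DΦm q) = q)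
    (hDinv' : ∀ ξ ∈ Set.Ici (DΦm q₀), Dinv ξ ∈ Set.Ioc (0:ℝ) q₀ ∧ DΦm (Dinv ξ) = ξ)
    (k : ℝ → ℝ → ℝ)
    (hk : ∀ t s : ℝ, 0 < s → s ≤ t →
      k t s = t ^ 2 * DΦm q₀ / ((1 - q₀) * s ^ 3 * DDΦm (Dinv (DΦm q₀ * t / s))))
    (I₀ I : ℝ → ℝ) (hI : Measurable I)
    (hInt1 : ∀ y > (0:ℝ),
      IntervalIntegrable (fun η => I (y * DΦm η) * DΦm η) volume 0 q₀)
    (hInt2 : ∀ t > (0:ℝ),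
      IntervalIntegrable (fun s => I (1 / s) * k t s) volume 0 t) :
    (∀ y > (0:ℝ),
        I (y * DΦm q₀)
          + ∫ η in (0:ℝ)..q₀, I (y * DΦm η) * DΦm η / ((1 - q₀) * DΦm q₀)
        = I₀ y / ((1 - q₀) * DΦm q₀))
      ↔
    (∀ t > (0:ℝ),
        I (1 / t) = (1 / ((1 - q₀) * DΦm q₀)) * I₀ (1 / (t * DΦm q₀))
          + ∫ s in (0:ℝ)..t, I (1 / s) * k t s) := by
  obtain ⟨hq0pos, hq0lt⟩ := hq₀
  have h1q : (0:ℝ) < 1 - q₀ := by linarith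
  have hd : 0 < DΦm q₀ := hDq₀
  have hq₀mem : q₀ ∈ Set.Ioc (0:ℝ) q₀ := ⟨hq0pos, le_rfl⟩
  have hcont : ContinuousOn DΦm (Set.Ioc 0 q₀) :=
    fun x hx => (hΦmD2 x hx).continuousWithinAt
  have hanti : StrictAntiOn DΦm (Set.Ioc 0 q₀) := by
    apply strictAntiOn_of_deriv_neg (convex_Ioc 0 q₀) hcont
    intro x hx
    rw [interior_Ioc] at hx
    have hx' : x ∈ Set.Ioc (0:ℝ) q₀ := ⟨hx.1, hx.2.le⟩
    have hmem : Set.Ioc (0:ℝ) q₀ ∈ 𝓝 x := Ioc_mem_nhds hx.1 hx.2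
    have hda := (hΦmD2 x hx').hasDerivAt hmem
    rw [hda.deriv]
    exact hconc x hx'
  have hDpos : ∀ η ∈ Set.Ioc (0:ℝ) q₀, 0 < DΦm η := by
    intro η hη
    rcases eq_or_lt_of_le hη.2 with h | h
    · rw [h]; exact hd
    · exact lt_trans hd (hanti hη hq₀mem h)
  -- key change-of-variables identity
  have key : ∀ t : ℝ, 0 < t →
      (∫ s in (0:ℝ)..t, I (1/s) * k t s)
        = -(∫ η in (0:ℝ)..q₀, I ((1/(t * DΦm q₀)) * DΦm η) * DΦm η)
            / ((1 - q₀) * DΦm q₀) := by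
    intro t ht
    set c := DΦm q₀ * t with hc
    have hcpos : 0 < c := mul_pos hd ht
    set f : ℝ → ℝ := fun η => c / DΦm η with hf
    set f' : ℝ → ℝ := fun η => c * (-DDΦm η / (DΦm η)^2) with hf'
    have hderiv : ∀ η ∈ Set.Ioo (0:ℝ) q₀, HasDerivWithinAt f (f' η) (Set.Ioo 0 q₀) η := by
      intro η hη
      have hη' : η ∈ Set.Ioc (0:ℝ) q₀ := ⟨hη.1, hη.2.le⟩
      have hne : DΦm η ≠ 0 := (hDpos η hη').ne'
      have h1 := (((hΦmD2 η hη').mono Set.Ioo_subset_Ioc_self).inv hne).const_mul c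
      simpa [hf, hf', div_eq_mul_inv] using h1
    have hinj : Set.InjOn f (Set.Ioo 0 q₀) := by
      intro a ha b hb hab
      have ha' : a ∈ Set.Ioc (0:ℝ) q₀ := ⟨ha.1, ha.2.le⟩
      have hb' : b ∈ Set.Ioc (0:ℝ) q₀ := ⟨hb.1, hb.2.le⟩
      have hA : DΦm a ≠ 0 := (hDpos a ha').ne'
      have hB : DΦm b ≠ 0 := (hDpos b hb').ne'
      have hDab : DΦm a = DΦm b := by
        have hab' : c / DΦm a = c / DΦm b := hab
        rw [div_eq_div_iff hA hB] at hab'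
        exact (mul_left_cancel₀ hcpos.ne' hab').symm
      calc a = Dinv (DΦm a) := (hDinv a ha').symm
        _ = Dinv (DΦm b) := by rw [hDab]
        _ = b := hDinv b hb'
    have himg : f '' Set.Ioo 0 q₀ = Set.Ioo 0 t := by
      ext s
      simp only [Set.mem_image, Set.mem_Ioo]
      constructor
      · rintro ⟨η, ⟨h0, hq⟩, rfl⟩
        have hη' : η ∈ Set.Ioc (0:ℝ) q₀ := ⟨h0, hq.le⟩
        have hD := hDpos η hη'
        have hDgt : DΦm q₀ < DΦm η := hanti hη' hq₀mem hq
        refine ⟨div_pos hcpos hD, ?_⟩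
        rw [div_lt_iff₀ hD]
        nlinarith
      · rintro ⟨hs0, hst⟩
        have hgt : DΦm q₀ < c / s := by
          rw [lt_div_iff₀ hs0]; nlinarith
        obtain ⟨hmem, hvaleq⟩ := hDinv' (c/s) hgt.le
        have hlt : Dinv (c/s) < q₀ := by
          rcases lt_or_eq_of_le hmem.2 with h | h
          · exact h
          · exfalso; rw [h] at hvaleq; rw [← hvaleq] at hgt; exact lt_irrefl _ hgt
        refine ⟨Dinv (c/s), ⟨hmem.1, hlt⟩, ?_⟩
        simp only [hf]
        rw [hvaleq]
        field_simp
    have hchg := MeasureTheory.integral_image_eq_integral_abs_deriv_smul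
      (measurableSet_Ioo (a := (0:ℝ)) (b := q₀)) hderiv hinj
      (fun s => I (1/s) * k t s)
    rw [himg] at hchg
    rw [intervalIntegral.integral_of_le ht.le, intervalIntegral.integral_of_le hq0pos.le,
        MeasureTheory.integral_Ioc_eq_integral_Ioo, MeasureTheory.integral_Ioc_eq_integral_Ioo,
        hchg, ← MeasureTheory.integral_neg, ← MeasureTheory.integral_div]
    apply MeasureTheory.setIntegral_congr_fun measurableSet_Ioo
    intro η hη
    have hη' : η ∈ Set.Ioc (0:ℝ) q₀ := ⟨hη.1, hη.2.le⟩
    have hD : 0 < DΦm η := hDpos η hη'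
    have hDgt : DΦm q₀ < DΦm η := hanti hη' hq₀mem hη.2
    have hDD : DDΦm η < 0 := hconc η hη'
    have hne1 : DΦm η ≠ 0 := hD.ne'
    have hne2 : DDΦm η ≠ 0 := hDD.ne
    have hne3 : (1 - q₀) ≠ 0 := h1q.ne'
    have hne4 : DΦm q₀ ≠ 0 := hd.ne'
    have hne5 : t ≠ 0 := ht.ne'
    have hfpos : 0 < f η := div_pos hcpos hD
    have hfle : f η ≤ t := by
      simp only [hf]
      rw [div_le_iff₀ hD]
      nlinarith
    have hkval := hk t (f η) hfpos hfle
    have harg : DΦm q₀ * t / f η = DΦm η := by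
      simp only [hf, ← hc]
      field_simp
    rw [harg, hDinv η hη'] at hkval
    have hIarg : 1 / f η = (1/(t * DΦm q₀)) * DΦm η := by
      simp only [hf, hc]
      rw [one_div, one_div, mul_inv, div_eq_mul_inv, mul_inv, inv_inv]
      ring
    have hf'pos : 0 < f' η := by
      simp only [hf']
      apply mul_pos hcpos
      apply div_pos (by linarith) (by positivity)
    dsimp only
    rw [smul_eq_mul, hkval, hIarg, abs_of_pos hf'pos]
    simp only [hf', hf, hc]
    field_simp
  -- now the equivalence
  constructor
  · intro h t ht
    set y : ℝ := 1 / (t * DΦm q₀) with hy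
    have hypos : 0 < y := by positivity
    have hyd : y * DΦm q₀ = 1 / t := by
      rw [hy]; field_simp
    have h1 := h y hypos
    rw [intervalIntegral.integral_div] at h1
    rw [hyd] at h1
    have h2 := key t ht
    rw [← hy] at h2
    have h3 : (1 / ((1 - q₀) * DΦm q₀)) * I₀ y = I₀ y / ((1 - q₀) * DΦm q₀) := by ring
    rw [h2, h3]
    have h4 : -(∫ η in (0:ℝ)..q₀, I (y * DΦm η) * DΦm η) / ((1 - q₀) * DΦm q₀)
        = -((∫ η in (0:ℝ)..q₀, I (y * DΦm η) * DΦm η) / ((1 - q₀) * DΦm q₀)) := by ring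
    rw [h4]
    linarith
  · intro h y hy
    set t : ℝ := 1 / (y * DΦm q₀) with htd
    have ht : 0 < t := by positivity
    have h1t : 1 / t = y * DΦm q₀ := by
      rw [htd]; field_simp
    have hyt : 1 / (t * DΦm q₀) = y := by
      rw [htd]; field_simp
    have h1 := h t ht
    have h2 := key t ht
    rw [hyt] at h1 h2
    rw [h1t] at h1
    rw [intervalIntegral.integral_div]
    have h3 : (1 / ((1 - q₀) * DΦm q₀)) * I₀ y = I₀ y / ((1 - q₀) * DΦm q₀) := by ring
    rw [h3] at h1
    have h4 : -(∫ η in (0:ℝ)..q₀, I (y * DΦm η) * DΦm η) / ((1 - q₀) * DΦm q₀)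
        = -((∫ η in (0:ℝ)..q₀, I (y * DΦm η) * DΦm η) / ((1 - q₀) * DΦm q₀)) := by ring
    rw [h2, h4] at h1
    linarith
end

section
/- Let I : (0,∞) → (0,∞) be continuous and non-increasing, let λ > 0, suppose Φ̂'(p) > 0 for almost every p ∈ (0,1), and suppose both integrals below are finite. Then ∫₀¹ I(λ·Φ̂'(p))·Φ'(p) dp = ∫₀¹ I(λ·Φ̂'(p))·Φ̂'(p) dp. -/
open MeasureTheory Set Filter Topology

lemma aux_slope_tendsto {w : ℝ → ℝ} (hw : Integrable w volume) :
    ∀ᵐ q : ℝ, Tendsto (fun y => ((∫ t in (0:ℝ)..y, w t) - ∫ t in (0:ℝ)..q, w t) / (y - q))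
      (𝓝[≠] q) (𝓝 (w q)) := by
  have hloc : LocallyIntegrable w volume := hw.locallyIntegrable
  filter_upwards [IsUnifLocDoublingMeasure.ae_tendsto_average_norm_sub (μ := volume) hloc 1]
    with q hq
  have h0 : Tendsto (fun r : ℝ => ⨍ y in Metric.closedBall q r, ‖w y - w q‖) (𝓝[>] 0) (𝓝 0) := by
    have := hq (fun _ : ℝ => q) id tendsto_id ?_
    · simpa using this
    · filter_upwards [self_mem_nhdsWithin] with r hr
      simp only [Metric.mem_closedBall, dist_self, one_mul]
      exact le_of_lt hr
  set A : ℝ → ℝ := fun r => ⨍ y in Metric.closedBall q r, ‖w y - w q‖ with hA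
  have hAcomp : Tendsto (fun y : ℝ => 2 * A |y - q|) (𝓝[≠] q) (𝓝 0) := by
    have h1 : Tendsto (fun y : ℝ => |y - q|) (𝓝[≠] q) (𝓝[>] 0) := by
      rw [tendsto_nhdsWithin_iff]
      constructor
      · have : Tendsto (fun y : ℝ => |y - q|) (𝓝 q) (𝓝 |q - q|) :=
          ((continuous_id.sub continuous_const).abs).tendsto q
        simp only [sub_self, abs_zero] at this
        exact this.mono_left nhdsWithin_le_nhds
      · filter_upwards [self_mem_nhdsWithin] with y hy
        simpa [abs_pos] using sub_ne_zero.mpr hy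
    have := (h0.comp h1).const_mul (2:ℝ)
    simpa using this
  have hbound : ∀ᶠ y in 𝓝[≠] q,
      ‖((∫ t in (0:ℝ)..y, w t) - ∫ t in (0:ℝ)..q, w t) / (y - q) - w q‖ ≤ 2 * A |y - q| := by
    filter_upwards [self_mem_nhdsWithin] with y hy
    have hy' : y ≠ q := hy
    have hyq : y - q ≠ 0 := sub_ne_zero.mpr hy'
    have habs : (0:ℝ) < |y - q| := abs_pos.mpr hyq
    have hInt : ∀ a b : ℝ, IntervalIntegrable w volume a b := fun a b => hw.intervalIntegrable
    have e1 : (∫ t in (0:ℝ)..y, w t) - ∫ t in (0:ℝ)..q, w t = ∫ t in q..y, w t :=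
      intervalIntegral.integral_interval_sub_left (hInt 0 y) (hInt 0 q)
    have e2 : ((∫ t in (0:ℝ)..y, w t) - ∫ t in (0:ℝ)..q, w t) / (y - q) - w q
        = (∫ t in q..y, (w t - w q)) / (y - q) := by
      rw [intervalIntegral.integral_sub (hInt q y) intervalIntegrable_const,
        intervalIntegral.integral_const, smul_eq_mul, ← e1]
      field_simp
    have e3 : ‖∫ t in q..y, (w t - w q)‖ ≤ ∫ t in Metric.closedBall q |y - q|, ‖w t - w q‖ := by
      refine intervalIntegral.norm_integral_le_integral_norm_uIoc.trans ?_
      have hcint : IntegrableOn (fun t => ‖w t - w q‖) (Metric.closedBall q |y - q|) volume := by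
        refine (hw.integrableOn.sub ((integrableOn_const_iff).mpr (Or.inr ?_))).norm
        exact measure_closedBall_lt_top
      refine setIntegral_mono_set hcint
        (Eventually.of_forall fun t => norm_nonneg _) (HasSubset.Subset.eventuallyLE ?_)
      intro t ht
      rw [Set.mem_uIoc] at ht
      rw [Metric.mem_closedBall, Real.dist_eq]
      rcases ht with ⟨h1, h2⟩ | ⟨h1, h2⟩
      · rw [abs_of_pos (by linarith), abs_of_nonneg (by linarith : (0:ℝ) ≤ y - q)]
        linarith
      · rw [abs_of_nonpos (by linarith), abs_of_nonpos (by linarith : y - q ≤ 0)]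
        linarith
    have e4 : ∫ t in Metric.closedBall q |y - q|, ‖w t - w q‖ = (2 * |y - q|) * A |y - q| := by
      simp only [hA, setAverage_eq, smul_eq_mul, Real.volume_closedBall, Real.volume_real_closedBall (abs_nonneg _),
        ENNReal.toReal_ofReal (by linarith : (0:ℝ) ≤ 2 * |y - q|)]
      rw [← mul_assoc, mul_inv_cancel₀ (by positivity), one_mul]
    rw [e2, norm_div, Real.norm_eq_abs (y - q)]
    rw [div_le_iff₀ habs]
    calc ‖∫ t in q..y, (w t - w q)‖ ≤ (2 * |y - q|) * A |y - q| := e3.trans_eq e4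
      _ = 2 * A |y - q| * |y - q| := by ring
  have hsub : Tendsto (fun y => ((∫ t in (0:ℝ)..y, w t) - ∫ t in (0:ℝ)..q, w t) / (y - q) - w q)
      (𝓝[≠] q) (𝓝 0) := squeeze_zero_norm' hbound hAcomp
  have := hsub.add (tendsto_const_nhds (x := w q) (f := 𝓝[≠] q))
  simpa using this

lemma aux_deriv_zero_on_const {w : ℝ → ℝ} (hw : Integrable w volume) {s : Set ℝ}
    (hs : MeasurableSet s) {c : ℝ} (hconst : ∀ x ∈ s, (∫ t in (0:ℝ)..x, w t) = c) :
    ∀ᵐ q, q ∈ s → w q = 0 := by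
  rw [← ae_restrict_iff' hs]
  filter_upwards [ae_restrict_of_ae (aux_slope_tendsto hw),
    Besicovitch.ae_tendsto_measure_inter_div volume s, ae_restrict_mem hs] with q hq hq2 hqs
  -- q is not isolated in s
  have hne : (𝓝[s \ {q}] q).NeBot := by
    rw [← mem_closure_iff_nhdsWithin_neBot]
    by_contra hcl
    rw [Metric.mem_closure_iff] at hcl
    push_neg at hcl
    obtain ⟨ε, hε, hfar⟩ := hcl
    have hzero : ∀ᶠ r in 𝓝[>] (0:ℝ),
        volume (s ∩ Metric.closedBall q r) / volume (Metric.closedBall q r) = 0 := by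
      filter_upwards [Ioo_mem_nhdsGT_of_mem ⟨le_refl 0, half_pos hε⟩] with r hr
      have hsub : s ∩ Metric.closedBall q r ⊆ {q} := by
        intro y ⟨hy1, hy2⟩
        by_contra hyq
        have : y ∈ s \ {q} := ⟨hy1, hyq⟩
        have := hfar y this
        rw [Metric.mem_closedBall] at hy2
        rw [dist_comm] at hy2
        linarith [hr.2]
      have : volume (s ∩ Metric.closedBall q r) = 0 :=
        le_antisymm ((measure_mono hsub).trans (le_of_eq (measure_singleton q))) (by positivity)
      rw [this, ENNReal.zero_div]
    have : Tendsto (fun r => volume (s ∩ Metric.closedBall q r) / volume (Metric.closedBall q r))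
        (𝓝[>] (0:ℝ)) (𝓝 0) := Tendsto.congr' (hzero.mono fun r hr => hr.symm) tendsto_const_nhds
    exact zero_ne_one (tendsto_nhds_unique this hq2)
  -- slope vanishes along s \ {q}
  have h1 : Tendsto (fun y => ((∫ t in (0:ℝ)..y, w t) - ∫ t in (0:ℝ)..q, w t) / (y - q))
      (𝓝[s \ {q}] q) (𝓝 (w q)) :=
    hq.mono_left (nhdsWithin_mono q (fun y hy => hy.2))
  have h2 : Tendsto (fun y => ((∫ t in (0:ℝ)..y, w t) - ∫ t in (0:ℝ)..q, w t) / (y - q))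
      (𝓝[s \ {q}] q) (𝓝 0) := by
    refine Tendsto.congr' ?_ tendsto_const_nhds
    filter_upwards [eventually_mem_nhdsWithin] with y hy
    rw [hconst y hy.1, hconst q hqs, sub_self, zero_div]
  exact tendsto_nhds_unique h1 h2

def chordSet (Φ : ℝ → ℝ) (q : ℝ) : Set ℝ :=
  {v : ℝ | ∃ α β : ℝ, 0 ≤ α ∧ α ≤ q ∧ q ≤ β ∧ β ≤ 1 ∧ α < β ∧
    v = ((β - q) * Φ α + (q - α) * Φ β) / (β - α)}

lemma chordSet_bddAbove {Φ : ℝ → ℝ} (hΦmono : MonotoneOn Φ (Set.Icc 0 1)) {q : ℝ}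
    (hq : q ∈ Set.Icc (0:ℝ) 1) : BddAbove (chordSet Φ q) := by
  refine ⟨Φ 1, fun v hv => ?_⟩
  obtain ⟨α, β, hα0, hαq, hqβ, hβ1, hαβ, hveq⟩ := hv
  have hαI : α ∈ Set.Icc (0:ℝ) 1 := ⟨hα0, hαq.trans hq.2⟩
  have hβI : β ∈ Set.Icc (0:ℝ) 1 := ⟨(hq.1.trans hqβ), hβ1⟩
  have h1I : (1:ℝ) ∈ Set.Icc (0:ℝ) 1 := ⟨zero_le_one, le_refl 1⟩
  have hα := hΦmono hαI h1I hαI.2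
  have hβ := hΦmono hβI h1I hβI.2
  rw [hveq, div_le_iff₀ (by linarith : (0:ℝ) < β - α)]
  nlinarith [sub_nonneg.mpr hαq, sub_nonneg.mpr hqβ]

lemma chordSet_self_mem {Φ : ℝ → ℝ} {q : ℝ} (hq : q ∈ Set.Icc (0:ℝ) 1) :
    Φ q ∈ chordSet Φ q := by
  rcases lt_or_eq_of_le hq.2 with h | h
  · exact ⟨q, 1, hq.1, le_refl q, h.le, le_refl 1, h, by
      rw [sub_self, zero_mul, add_zero, mul_comm, mul_div_assoc,
        div_self (by linarith : (1:ℝ) - q ≠ 0), mul_one]⟩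
  · exact ⟨0, 1, le_refl 0, hq.1, hq.2, le_refl 1, zero_lt_one, by rw [h]; ring⟩

lemma chordSet_nonempty {Φ : ℝ → ℝ} {q : ℝ} (hq : q ∈ Set.Icc (0:ℝ) 1) :
    (chordSet Φ q).Nonempty := ⟨Φ q, chordSet_self_mem hq⟩

lemma le_env {Φ : ℝ → ℝ} (hΦmono : MonotoneOn Φ (Set.Icc 0 1)) {q : ℝ}
    (hq : q ∈ Set.Icc (0:ℝ) 1) : Φ q ≤ sSup (chordSet Φ q) :=
  le_csSup (chordSet_bddAbove hΦmono hq) (chordSet_self_mem hq)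

lemma env_zero {Φ : ℝ → ℝ} : sSup (chordSet Φ 0) = Φ 0 := by
  have : chordSet Φ 0 = {Φ 0} := by
    ext v
    constructor
    · rintro ⟨α, β, hα0, hαq, hqβ, hβ1, hαβ, hveq⟩
      have hα : α = 0 := le_antisymm hαq hα0
      subst hα
      simp only [Set.mem_singleton_iff, hveq, sub_zero, zero_sub, neg_zero, zero_mul, add_zero]
      rw [mul_comm, mul_div_assoc, div_self (ne_of_gt hαβ), mul_one]
    · rintro rfl
      exact chordSet_self_mem ⟨le_refl 0, zero_le_one⟩
  rw [this, csSup_singleton]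

lemma env_one {Φ : ℝ → ℝ} : sSup (chordSet Φ 1) = Φ 1 := by
  have : chordSet Φ 1 = {Φ 1} := by
    ext v
    constructor
    · rintro ⟨α, β, hα0, hαq, hqβ, hβ1, hαβ, hveq⟩
      have hβ : β = 1 := le_antisymm hβ1 hqβ
      subst hβ
      simp only [Set.mem_singleton_iff, hveq, sub_self, zero_mul, zero_add]
      rw [mul_comm, mul_div_assoc, div_self (by linarith : (1:ℝ) - α ≠ 0), mul_one]
    · rintro rfl
      exact chordSet_self_mem ⟨zero_le_one, le_refl 1⟩
  rw [this, csSup_singleton]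

lemma env_affine_of_lt {Φ Φhat : ℝ → ℝ} (hΦmono : MonotoneOn Φ (Set.Icc 0 1))
    (hΦcont : ContinuousOn Φ (Set.Icc 0 1))
    (hEnv : ∀ q ∈ Set.Icc (0:ℝ) 1, Φhat q = sSup (chordSet Φ q))
    {q : ℝ} (hq : q ∈ Set.Ioo (0:ℝ) 1) (hlt : Φ q < Φhat q) :
    ∃ a b : ℝ, 0 ≤ a ∧ a < q ∧ q < b ∧ b ≤ 1 ∧ Φhat a = Φ a ∧ Φhat b = Φ b ∧
      ∀ x ∈ Set.Icc a b, Φhat x = Φ a + (Φ b - Φ a) / (b - a) * (x - a) := by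
  have hqI : q ∈ Set.Icc (0:ℝ) 1 := ⟨hq.1.le, hq.2.le⟩
  have hSup : Φhat q = sSup (chordSet Φ q) := hEnv q hqI
  set ε : ℝ := (Φhat q - Φ q) / 2 with hεdef
  have hε : 0 < ε := by simp only [hεdef]; linarith
  -- δ from continuity of Φ at q
  obtain ⟨δ, hδ, hcont⟩ := Metric.continuousWithinAt_iff.mp (hΦcont q hqI) ε hε
  -- short chords have value ≤ Φ q + ε
  have hshort : ∀ α β : ℝ, 0 ≤ α → α ≤ q → q ≤ β → β ≤ 1 → α < β → β - α < δ →
      ((β - q) * Φ α + (q - α) * Φ β) / (β - α) ≤ Φ q + ε := by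
    intro α β hα0 hαq hqβ hβ1 hαβ hβαδ
    have hαI : α ∈ Set.Icc (0:ℝ) 1 := ⟨hα0, hαq.trans hqI.2⟩
    have hβI : β ∈ Set.Icc (0:ℝ) 1 := ⟨hqI.1.trans hqβ, hβ1⟩
    have hdα : dist α q < δ := by rw [Real.dist_eq, abs_of_nonpos (by linarith)]; linarith
    have hdβ : dist β q < δ := by rw [Real.dist_eq, abs_of_nonneg (by linarith)]; linarith
    have h1 := hcont hαI hdα
    have h2 := hcont hβI hdβ
    rw [Real.dist_eq, abs_lt] at h1 h2
    rw [div_le_iff₀ (by linarith : (0:ℝ) < β - α)]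
    nlinarith [sub_nonneg.mpr hαq, sub_nonneg.mpr hqβ]
  -- a long chord with value > Φ q + ε exists
  have hv₀lt : Φ q + ε < sSup (chordSet Φ q) := by
    rw [← hSup]; simp only [hεdef]; linarith
  obtain ⟨v1, hv1mem, hv1gt⟩ := exists_lt_of_lt_csSup (chordSet_nonempty hqI) hv₀lt
  obtain ⟨α₀, β₀, hα₀0, hα₀q, hqβ₀, hβ₀1, hα₀β₀, hv1eq⟩ := hv1mem
  have hlong0 : δ ≤ β₀ - α₀ := by
    by_contra hc
    push_neg at hc
    have := hshort α₀ β₀ hα₀0 hα₀q hqβ₀ hβ₀1 hα₀β₀ hc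
    rw [← hv1eq] at this
    linarith
  -- compact set of long chords
  set K : Set (ℝ × ℝ) := (Prod.fst ⁻¹' Set.Icc 0 q) ∩ (Prod.snd ⁻¹' Set.Icc q 1) ∩
    ((fun p : ℝ × ℝ => p.2 - p.1) ⁻¹' Set.Ici δ) with hKdef
  have hKclosed : IsClosed K :=
    ((isClosed_Icc.preimage continuous_fst).inter (isClosed_Icc.preimage continuous_snd)).inter
      (isClosed_Ici.preimage (continuous_snd.sub continuous_fst))
  have hKsub : K ⊆ Set.Icc (0:ℝ) 1 ×ˢ Set.Icc (0:ℝ) 1 := by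
    rintro p ⟨⟨h1, h2⟩, _⟩
    exact ⟨⟨h1.1, h1.2.trans hqI.2⟩, ⟨hqI.1.trans h2.1, h2.2⟩⟩
  have hKcompact : IsCompact K :=
    IsCompact.of_isClosed_subset (isCompact_Icc.prod isCompact_Icc) hKclosed hKsub
  set f : ℝ × ℝ → ℝ := fun p => ((p.2 - q) * Φ p.1 + (q - p.1) * Φ p.2) / (p.2 - p.1) with hfdef
  have hfcont : ContinuousOn f K := by
    apply ContinuousOn.div
    · apply ContinuousOn.add
      · exact ((continuous_snd.sub continuous_const).continuousOn).mul
          (hΦcont.comp continuous_fst.continuousOn (fun p hp => (hKsub hp).1))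
      · exact ((continuous_const.sub continuous_fst).continuousOn).mul
          (hΦcont.comp continuous_snd.continuousOn (fun p hp => (hKsub hp).2))
    · exact (continuous_snd.sub continuous_fst).continuousOn
    · rintro p ⟨_, hp2⟩
      have : δ ≤ p.2 - p.1 := hp2
      intro h0
      rw [h0] at this
      linarith
  have hKne : (α₀, β₀) ∈ K := ⟨⟨⟨hα₀0, hα₀q⟩, ⟨hqβ₀, hβ₀1⟩⟩, hlong0⟩
  obtain ⟨p₀, hp₀K, hp₀max⟩ := hKcompact.exists_isMaxOn ⟨(α₀, β₀), hKne⟩ hfcont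
  obtain ⟨a, b⟩ := p₀
  obtain ⟨⟨⟨ha0, haq⟩, ⟨hqb, hb1⟩⟩, habδ⟩ := hp₀K
  change 0 ≤ a at ha0
  change a ≤ q at haq
  change q ≤ b at hqb
  change b ≤ 1 at hb1
  have habδ' : δ ≤ b - a := habδ
  have hba : (0:ℝ) < b - a := lt_of_lt_of_le hδ habδ'
  have hab : a < b := by linarith
  -- maximality gives the sup
  have hfab : f (a, b) = ((b - q) * Φ a + (q - a) * Φ b) / (b - a) := rfl
  have hmaxval : Φhat q = f (a, b) := by
    apply le_antisymm
    · rw [hSup]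
      apply csSup_le (chordSet_nonempty hqI)
      rintro v ⟨α, β, hα0, hαq, hqβ, hβ1, hαβ, hveq⟩
      rcases le_or_gt δ (β - α) with hl | hs
      · have hmemK : (α, β) ∈ K := ⟨⟨⟨hα0, hαq⟩, ⟨hqβ, hβ1⟩⟩, hl⟩
        have := hp₀max hmemK
        rw [hveq]; exact this
      · have := hshort α β hα0 hαq hqβ hβ1 hαβ hs
        have h2 : v1 ≤ f (a, b) := by
          rw [hv1eq]; exact hp₀max hKne
        rw [hveq]; linarith
    · rw [hSup]
      exact le_csSup (chordSet_bddAbove hΦmono hqI)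
        ⟨a, b, ha0, haq, hqb, hb1, hab, hfab.symm⟩
  have hv1le : v1 ≤ f (a, b) := by rw [hv1eq]; exact hp₀max hKne
  have hfabgt : Φ q + ε < f (a, b) := lt_of_lt_of_le hv1gt hv1le
  -- a < q and q < b (strict)
  have haq' : a < q := by
    rcases lt_or_eq_of_le haq with h | h
    · exact h
    · exfalso
      have hba' : (0:ℝ) < b - q := by rw [← h]; exact hba
      have hval : ((b - q) * Φ a + (q - a) * Φ b) / (b - a) = Φ a := by
        rw [h, sub_self, zero_mul, add_zero, mul_comm, mul_div_assoc,
          div_self (ne_of_gt hba'), mul_one]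
      rw [hfab, hval, h] at hfabgt
      linarith
  have hqb' : q < b := by
    rcases lt_or_eq_of_le hqb with h | h
    · exact h
    · exfalso
      have hba' : (0:ℝ) < q - a := by rw [h]; exact hba
      have hval : ((b - q) * Φ a + (q - a) * Φ b) / (b - a) = Φ b := by
        rw [← h, sub_self, zero_mul, zero_add, mul_comm, mul_div_assoc,
          div_self (ne_of_gt hba'), mul_one]
      rw [hfab, hval, ← h] at hfabgt
      linarith
  set L : ℝ → ℝ := fun x => Φ a + (Φ b - Φ a) / (b - a) * (x - a) with hLdef
  have hidgen : ∀ c m aa x α β : ℝ, (c + m * (x - aa)) * (β - α)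
      = (β - x) * (c + m * (α - aa)) + (x - α) * (c + m * (β - aa)) := by
    intros; ring
  have hLa : L a = Φ a := by simp [hLdef]
  have hLb : L b = Φ b := by
    simp only [hLdef]
    rw [div_mul_cancel₀ _ (ne_of_gt hba)]
    ring
  have hm : (Φ b - Φ a) / (b - a) * (b - a) = Φ b - Φ a := div_mul_cancel₀ _ (ne_of_gt hba)
  have hchord : ∀ x : ℝ, ((b - x) * Φ a + (x - a) * Φ b) / (b - a) = L x := by
    intro x
    rw [eq_comm, hLdef]
    rw [eq_div_iff (ne_of_gt hba)]
    have hexp : (Φ a + (Φ b - Φ a) / (b - a) * (x - a)) * (b - a)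
        = Φ a * (b - a) + ((Φ b - Φ a) / (b - a) * (b - a)) * (x - a) := by ring
    rw [hexp, hm]
    ring
  have hHatqL : Φhat q = L q := by
    rw [hmaxval, hfab, ← hchord q]
  -- Φ ≤ L on [0,1]
  have hΦleL : ∀ x ∈ Set.Icc (0:ℝ) 1, Φ x ≤ L x := by
    intro x hx
    by_contra hgt
    push_neg at hgt
    rcases lt_trichotomy x q with hxq | rfl | hxq
    · -- chord (x, b)
      have hxb : x < b := hxq.trans hqb'
      have hmem : ((b - q) * Φ x + (q - x) * Φ b) / (b - x) ∈ chordSet Φ q :=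
        ⟨x, b, hx.1, hxq.le, hqb'.le, hb1, hxb, rfl⟩
      have hle : ((b - q) * Φ x + (q - x) * Φ b) / (b - x) ≤ Φhat q := by
        rw [hSup]; exact le_csSup (chordSet_bddAbove hΦmono hqI) hmem
      have hid : L q * (b - x) = (b - q) * L x + (q - x) * L b := by
        simp only [hLdef]
        exact hidgen (Φ a) ((Φ b - Φ a) / (b - a)) a q x b
      rw [div_le_iff₀ (by linarith : (0:ℝ) < b - x), hHatqL] at hle
      rw [hLb] at hid
      have k : (b - q) * L x < (b - q) * Φ x :=
        mul_lt_mul_of_pos_left hgt (by linarith)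
      linarith [hle, hid, k]
    · rw [hHatqL] at hlt; linarith
    · -- chord (a, x)
      have hax : a < x := haq'.trans hxq
      have hmem : ((x - q) * Φ a + (q - a) * Φ x) / (x - a) ∈ chordSet Φ q :=
        ⟨a, x, ha0, haq'.le, hxq.le, hx.2, hax, rfl⟩
      have hle : ((x - q) * Φ a + (q - a) * Φ x) / (x - a) ≤ Φhat q := by
        rw [hSup]; exact le_csSup (chordSet_bddAbove hΦmono hqI) hmem
      have hid : L q * (x - a) = (x - q) * L a + (q - a) * L x := by
        simp only [hLdef]
        exact hidgen (Φ a) ((Φ b - Φ a) / (b - a)) a q a x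
      rw [div_le_iff₀ (by linarith : (0:ℝ) < x - a), hHatqL] at hle
      rw [hLa] at hid
      have k : (q - a) * L x < (q - a) * Φ x :=
        mul_lt_mul_of_pos_left hgt (by linarith)
      linarith [hle, hid, k]
  -- Φhat ≤ L on [0,1]
  have hHatleL : ∀ x ∈ Set.Icc (0:ℝ) 1, Φhat x ≤ L x := by
    intro x hx
    rw [hEnv x hx]
    apply csSup_le (chordSet_nonempty hx)
    rintro v ⟨α, β, hα0, hαx, hxβ, hβ1, hαβ, hveq⟩
    have hαI : α ∈ Set.Icc (0:ℝ) 1 := ⟨hα0, hαx.trans hx.2⟩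
    have hβI : β ∈ Set.Icc (0:ℝ) 1 := ⟨hx.1.trans hxβ, hβ1⟩
    have h1 := hΦleL α hαI
    have h2 := hΦleL β hβI
    have hid : L x * (β - α) = (β - x) * L α + (x - α) * L β := by
      simp only [hLdef]
      exact hidgen (Φ a) ((Φ b - Φ a) / (b - a)) a x α β
    rw [hveq, div_le_iff₀ (by linarith : (0:ℝ) < β - α)]
    have k1 : (β - x) * Φ α ≤ (β - x) * L α := mul_le_mul_of_nonneg_left h1 (by linarith)
    have k2 : (x - α) * Φ β ≤ (x - α) * L β := mul_le_mul_of_nonneg_left h2 (by linarith)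
    linarith [hid, k1, k2]
  -- L ≤ Φhat on [a,b]
  have haI : a ∈ Set.Icc (0:ℝ) 1 := ⟨ha0, haq.trans hqI.2⟩
  have hbI : b ∈ Set.Icc (0:ℝ) 1 := ⟨hqI.1.trans hqb, hb1⟩
  have hLleHat : ∀ x ∈ Set.Icc a b, L x ≤ Φhat x := by
    intro x hx
    have hxI : x ∈ Set.Icc (0:ℝ) 1 := ⟨haI.1.trans hx.1, hx.2.trans hbI.2⟩
    rw [hEnv x hxI]
    exact le_csSup (chordSet_bddAbove hΦmono hxI)
      ⟨a, b, ha0, hx.1, hx.2, hb1, hab, (hchord x).symm⟩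
  have hΦhata : Φhat a = Φ a := by
    have h1 : Φhat a ≤ L a := hHatleL a haI
    have h2 : Φ a ≤ Φhat a := by rw [hEnv a haI]; exact le_env hΦmono haI
    rw [hLa] at h1
    linarith
  have hΦhatb : Φhat b = Φ b := by
    have h1 : Φhat b ≤ L b := hHatleL b hbI
    have h2 : Φ b ≤ Φhat b := by rw [hEnv b hbI]; exact le_env hΦmono hbI
    rw [hLb] at h1
    linarith
  refine ⟨a, b, ha0, haq', hqb', hb1, hΦhata, hΦhatb, fun x hx => ?_⟩
  have hxI : x ∈ Set.Icc (0:ℝ) 1 := ⟨haI.1.trans hx.1, hx.2.trans hbI.2⟩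
  exact le_antisymm (hHatleL x hxI) (hLleHat x hx)

lemma aux_open_conn_interval {C : Set ℝ} (hopen : IsOpen C) (hconn : IsPreconnected C)
    (hsub : C ⊆ Set.Ioo 0 1) (hne : C.Nonempty) :
    ∃ a b : ℝ, 0 ≤ a ∧ a < b ∧ b ≤ 1 ∧ C = Set.Ioo a b ∧ a ∉ C ∧ b ∉ C := by
  have hbdd_below : BddBelow C := ⟨0, fun x hx => (hsub hx).1.le⟩
  have hbdd_above : BddAbove C := ⟨1, fun x hx => (hsub hx).2.le⟩
  set a := sInf C with ha
  set b := sSup C with hb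
  have haC : a ∉ C := by
    intro haC
    obtain ⟨ε, hε, hball⟩ := Metric.isOpen_iff.mp hopen a haC
    have : a - ε / 2 ∈ C := by
      apply hball
      rw [Metric.mem_ball, Real.dist_eq, abs_of_nonpos (by linarith)]
      linarith
    have := csInf_le hbdd_below this
    simp only [← ha] at this
    linarith
  have hbC : b ∉ C := by
    intro hbC
    obtain ⟨ε, hε, hball⟩ := Metric.isOpen_iff.mp hopen b hbC
    have : b + ε / 2 ∈ C := by
      apply hball
      rw [Metric.mem_ball, Real.dist_eq, abs_of_nonneg (by linarith)]
      linarith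
    have := le_csSup hbdd_above this
    simp only [← hb] at this
    linarith
  have hCsub : C ⊆ Set.Ioo a b := by
    intro x hx
    constructor
    · exact lt_of_le_of_ne (csInf_le hbdd_below hx) (fun h => haC (h ▸ hx))
    · exact lt_of_le_of_ne (le_csSup hbdd_above hx) (fun h => hbC (h.symm ▸ hx))
  have hIoosub : Set.Ioo a b ⊆ C := by
    intro z hz
    obtain ⟨x, hxC, hxz⟩ := exists_lt_of_csInf_lt hne hz.1
    obtain ⟨y, hyC, hzy⟩ := exists_lt_of_lt_csSup hne hz.2
    exact (hconn.ordConnected).out hxC hyC ⟨hxz.le, hzy.le⟩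
  obtain ⟨x₀, hx₀⟩ := hne
  have hax : a < x₀ := (hCsub hx₀).1
  have hxb : x₀ < b := (hCsub hx₀).2
  refine ⟨a, b, ?_, lt_trans hax hxb, ?_, le_antisymm hCsub hIoosub, haC, hbC⟩
  · exact le_csInf ⟨x₀, hx₀⟩ (fun x hx => (hsub hx).1.le)
  · exact csSup_le ⟨x₀, hx₀⟩ (fun x hx => (hsub hx).2.le)

/-- Lemma `lem:Aux_integ_ident`: for a continuous non-increasing
`I : (0,∞) → (0,∞)` and `λ > 0`, integrating `I(λ·Φ̂'(p))` against `Φ'` over `(0,1)`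
gives the same value as integrating it against `Φ̂'`, where `Φ̂` is the concave
envelope of the absolutely continuous nondecreasing function `Φ`. -/
theorem stmt_12
    (Φ Φhat DΦ DΦhat : ℝ → ℝ)
    (hΦmono : MonotoneOn Φ (Set.Icc 0 1))
    (hDΦint : IntegrableOn DΦ (Set.Ioc 0 1))
    (hΦFTC : ∀ q ∈ Set.Icc (0:ℝ) 1, Φ q = Φ 0 + ∫ p in (0:ℝ)..q, DΦ p)
    (hEnv : ∀ q ∈ Set.Icc (0:ℝ) 1, Φhat q =
      sSup {v : ℝ | ∃ α β : ℝ, 0 ≤ α ∧ α ≤ q ∧ q ≤ β ∧ β ≤ 1 ∧ α < β ∧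
        v = ((β - q) * Φ α + (q - α) * Φ β) / (β - α)})
    (hDΦhatint : IntegrableOn DΦhat (Set.Ioc 0 1))
    (hΦhatFTC : ∀ q ∈ Set.Icc (0:ℝ) 1, Φhat q = Φhat 0 + ∫ p in (0:ℝ)..q, DΦhat p)
    (I : ℝ → ℝ)
    (hIpos : ∀ y ∈ Set.Ioi (0:ℝ), 0 < I y)
    (hIc : ContinuousOn I (Set.Ioi 0))
    (hIanti : AntitoneOn I (Set.Ioi 0))
    (lam : ℝ) (hlam : 0 < lam)
    (hDpos : ∀ᵐ p ∂(volume.restrict (Set.Ioo (0:ℝ) 1)), 0 < DΦhat p)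
    (hint1 : IntervalIntegrable (fun p => I (lam * DΦhat p) * DΦ p) volume 0 1)
    (hint2 : IntervalIntegrable (fun p => I (lam * DΦhat p) * DΦhat p) volume 0 1) :
    ∫ p in (0:ℝ)..1, I (lam * DΦhat p) * DΦ p
      = ∫ p in (0:ℝ)..1, I (lam * DΦhat p) * DΦhat p := by
  have h01 : (0:ℝ) ≤ 1 := zero_le_one
  set g : ℝ → ℝ := fun p => I (lam * DΦhat p) * (DΦ p - DΦhat p) with hgdef
  have hEnv' : ∀ q ∈ Set.Icc (0:ℝ) 1, Φhat q = sSup (chordSet Φ q) := hEnv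
  have hhat0 : Φhat 0 = Φ 0 := by rw [hEnv' 0 ⟨le_refl 0, h01⟩, env_zero]
  have hhat1 : Φhat 1 = Φ 1 := by rw [hEnv' 1 ⟨h01, le_refl 1⟩, env_one]
  -- continuity of Φ and Φhat on [0,1]
  have hcont_of : ∀ (F DF : ℝ → ℝ), IntegrableOn DF (Set.Ioc 0 1) volume →
      (∀ q ∈ Set.Icc (0:ℝ) 1, F q = F 0 + ∫ p in (0:ℝ)..q, DF p) →
      ContinuousOn F (Set.Icc 0 1) := by
    intro F DF hDF hFTC
    have hIcc : IntegrableOn DF (Set.Icc 0 1) volume := by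
      rw [integrableOn_Icc_iff_integrableOn_Ioc]; exact hDF
    have h1 : ContinuousOn (fun x => F 0 + ∫ p in (0:ℝ)..x, DF p) (Set.Icc 0 1) := by
      apply ContinuousOn.add continuousOn_const
      have h2 := intervalIntegral.continuousOn_primitive_interval
        (a := 0) (b := 1) (μ := volume) (f := DF) (by rw [Set.uIcc_of_le h01]; exact hIcc)
      rw [Set.uIcc_of_le h01] at h2
      exact h2
    exact ContinuousOn.congr h1 (fun x hx => hFTC x hx)
  have hΦcont : ContinuousOn Φ (Set.Icc 0 1) := hcont_of Φ DΦ hDΦint hΦFTC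
  have hΦhatcont : ContinuousOn Φhat (Set.Icc 0 1) := hcont_of Φhat DΦhat hDΦhatint hΦhatFTC
  -- the open set U where Φ < Φhat
  set U : Set ℝ := Set.Ioo 0 1 ∩ (fun x => Φhat x - Φ x) ⁻¹' Set.Ioi 0 with hUdef
  have hUsubIoo : U ⊆ Set.Ioo (0:ℝ) 1 := Set.inter_subset_left
  have hUopen : IsOpen U :=
    ContinuousOn.isOpen_inter_preimage
      ((hΦhatcont.mono Set.Ioo_subset_Icc_self).sub (hΦcont.mono Set.Ioo_subset_Icc_self))
      isOpen_Ioo isOpen_Ioi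
  have hUmem : ∀ x, x ∈ U ↔ x ∈ Set.Ioo (0:ℝ) 1 ∧ Φ x < Φhat x := by
    intro x
    simp only [hUdef, Set.mem_inter_iff, Set.mem_preimage, Set.mem_Ioi, sub_pos]
  -- equality of Φ and Φhat off U
  have hends : ∀ y, y ∉ U → y ∈ Set.Icc (0:ℝ) 1 → Φhat y = Φ y := by
    intro y hyU hyI
    rcases eq_or_lt_of_le hyI.1 with h0 | hpos
    · rw [← h0]; exact hhat0
    rcases eq_or_lt_of_le hyI.2 with h1 | hlt1
    · rw [h1]; exact hhat1
    have hnlt : ¬ (Φ y < Φhat y) := fun hc => hyU ((hUmem y).mpr ⟨⟨hpos, hlt1⟩, hc⟩)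
    have hle : Φ y ≤ Φhat y := by rw [hEnv' y hyI]; exact le_env hΦmono hyI
    push_neg at hnlt
    linarith
  -- integrability of g on (0,1]
  have hgint : IntegrableOn g (Set.Ioc 0 1) volume := by
    have h := (hint1.sub hint2).1
    exact MeasureTheory.IntegrableOn.congr_fun h
      (fun p _ => by simp only [hgdef]; ring) measurableSet_Ioc
  -- interval integrability of DΦ on subintervals
  have hII : ∀ u v : ℝ, 0 ≤ u → v ≤ 1 → u ≤ v → IntervalIntegrable DΦ volume u v := by
    intro u v hu hv huv
    rw [intervalIntegrable_iff_integrableOn_Ioc_of_le huv]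
    exact hDΦint.mono_set (Set.Ioc_subset_Ioc hu hv)
  ------------------------------------------------------------------
  -- Part 1: the contact part
  ------------------------------------------------------------------
  set s₀ : Set ℝ := Set.Ioo 0 1 \ U with hs₀def
  have hs₀meas : MeasurableSet s₀ := measurableSet_Ioo.diff hUopen.measurableSet
  have hs₀sub : s₀ ⊆ Set.Ioc (0:ℝ) 1 := fun x hx => ⟨hx.1.1, hx.1.2.le⟩
  set w₀ : ℝ → ℝ := (Set.Ioc (0:ℝ) 1).indicator (fun t => DΦ t - DΦhat t) with hw₀def
  have hw₀int : Integrable w₀ volume :=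
    MeasureTheory.IntegrableOn.integrable_indicator
      (MeasureTheory.IntegrableOn.congr_fun (hDΦint.sub hDΦhatint)
        (fun t _ => rfl) measurableSet_Ioc) measurableSet_Ioc
  have hprim0 : ∀ x ∈ Set.Icc (0:ℝ) 1,
      (∫ t in (0:ℝ)..x, w₀ t) = (Φ x - Φ 0) - (Φhat x - Φhat 0) := by
    intro x hx
    rw [intervalIntegral.integral_of_le hx.1]
    rw [setIntegral_congr_fun measurableSet_Ioc
      (g := fun t => DΦ t - DΦhat t)
      (fun t ht => Set.indicator_of_mem (Set.Ioc_subset_Ioc le_rfl hx.2 ht) _)]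
    rw [integral_sub (hDΦint.mono_set (Set.Ioc_subset_Ioc le_rfl hx.2))
      (hDΦhatint.mono_set (Set.Ioc_subset_Ioc le_rfl hx.2))]
    rw [← intervalIntegral.integral_of_le hx.1, ← intervalIntegral.integral_of_le hx.1]
    have e1 := hΦFTC x hx
    have e2 := hΦhatFTC x hx
    linarith
  have hconst0 : ∀ x ∈ s₀, (∫ t in (0:ℝ)..x, w₀ t) = 0 := by
    intro x hx
    have hxI : x ∈ Set.Icc (0:ℝ) 1 := ⟨hx.1.1.le, hx.1.2.le⟩
    rw [hprim0 x hxI]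
    have := hends x hx.2 hxI
    rw [this, hhat0]
    ring
  have hae₀ := aux_deriv_zero_on_const hw₀int hs₀meas hconst0
  have hint_s0 : ∫ p in s₀, g p = 0 := by
    have hz : ∀ᵐ p ∂(volume.restrict s₀), g p = 0 := by
      rw [ae_restrict_iff' hs₀meas]
      filter_upwards [hae₀] with p hp hps
      have h0 : w₀ p = 0 := hp hps
      rw [hw₀def, Set.indicator_of_mem (hs₀sub hps)] at h0
      simp only [hgdef]
      rw [h0, mul_zero]
    exact integral_eq_zero_of_ae hz
  ------------------------------------------------------------------
  -- Part 2: the components of U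
  ------------------------------------------------------------------
  set comp : ℝ → Set ℝ := fun x => connectedComponentIn U x with hcompdef
  have hcomp_sub : ∀ x, comp x ⊆ U := fun x => connectedComponentIn_subset U x
  have hcomp_open : ∀ x, IsOpen (comp x) := fun x => hUopen.connectedComponentIn
  have hcomp_mem : ∀ x ∈ U, x ∈ comp x := fun x hx => mem_connectedComponentIn hx
  set 𝒞 : Set (Set ℝ) := {C | ∃ x ∈ U, C = comp x} with h𝒞def
  have h𝒞count : 𝒞.Countable := by
    have hsub : 𝒞 ⊆ Set.range (fun r : ℚ => comp (r : ℝ)) := by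
      rintro C ⟨x, hxU, rfl⟩
      obtain ⟨a, b, _, hab, _, hCeq, _, _⟩ := aux_open_conn_interval (hcomp_open x)
        isPreconnected_connectedComponentIn ((hcomp_sub x).trans hUsubIoo)
        ⟨x, hcomp_mem x hxU⟩
      obtain ⟨r, hr⟩ := exists_rat_btwn hab
      have hrC : (r : ℝ) ∈ comp x := by rw [hCeq]; exact ⟨hr.1, hr.2⟩
      exact ⟨r, (connectedComponentIn_eq hrC).symm⟩
    exact (Set.countable_range _).mono hsub
  haveI : Countable ↥𝒞 := h𝒞count.to_subtype
  have hmeas : ∀ C : ↥𝒞, MeasurableSet (C : Set ℝ) := by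
    rintro ⟨C, ⟨x, hx, rfl⟩⟩
    exact (hcomp_open x).measurableSet
  have hdisj : Pairwise (Function.onFun Disjoint (fun C : ↥𝒞 => (C : Set ℝ))) := by
    rintro ⟨C1, ⟨x1, hx1, rfl⟩⟩ ⟨C2, ⟨x2, hx2, rfl⟩⟩ hne12
    simp only [Function.onFun]
    rw [Set.disjoint_left]
    intro z hz1 hz2
    exact hne12 (Subtype.ext
      ((connectedComponentIn_eq hz1).trans (connectedComponentIn_eq hz2).symm))
  have hiUnion : (⋃ C : ↥𝒞, (C : Set ℝ)) = U := by
    rw [← Set.sUnion_eq_iUnion]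
    apply Set.Subset.antisymm
    · rintro x ⟨C, ⟨y, hyU, rfl⟩, hxC⟩
      exact hcomp_sub y hxC
    · intro x hxU
      exact ⟨comp x, ⟨x, hxU, rfl⟩, hcomp_mem x hxU⟩
  have hUint : IntegrableOn g U volume :=
    hgint.mono_set (fun x hx => ⟨(hUsubIoo hx).1, (hUsubIoo hx).2.le⟩)
  have hintU : ∫ p in U, g p = ∑' C : ↥𝒞, ∫ p in (C : Set ℝ), g p := by
    rw [← hiUnion]
    exact integral_iUnion hmeas hdisj (by rw [hiUnion]; exact hUint)
  -- each component contributes zero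
  have hcomp_zero : ∀ C : ↥𝒞, ∫ p in (C : Set ℝ), g p = 0 := by
    rintro ⟨C, ⟨x, hxU, rfl⟩⟩
    obtain ⟨a, b, ha0, hab, hb1, hCeq, haC, hbC⟩ := aux_open_conn_interval (hcomp_open x)
      isPreconnected_connectedComponentIn ((hcomp_sub x).trans hUsubIoo)
      ⟨x, hcomp_mem x hxU⟩
    have hxIoo : x ∈ Set.Ioo (0:ℝ) 1 := hUsubIoo hxU
    have hxlt : Φ x < Φhat x := ((hUmem x).mp hxU).2
    obtain ⟨a', b', ha'0, ha'x, hxb', hb'1, hca', hcb', haff⟩ :=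
      env_affine_of_lt hΦmono hΦcont hEnv' hxIoo hxlt
    have ha'U : a' ∉ U := by
      intro h
      have := ((hUmem a').mp h).2
      rw [hca'] at this
      exact lt_irrefl _ this
    have hb'U : b' ∉ U := by
      intro h
      have := ((hUmem b').mp h).2
      rw [hcb'] at this
      exact lt_irrefl _ this
    have hxab : x ∈ Set.Ioo a b := by rw [← hCeq]; exact hcomp_mem x hxU
    have ha'a : a' ≤ a := by
      by_contra hc
      push_neg at hc
      have : a' ∈ comp x := by rw [hCeq]; exact ⟨hc, lt_trans ha'x hxab.2⟩
      exact ha'U (hcomp_sub x this)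
    have hbb' : b ≤ b' := by
      by_contra hc
      push_neg at hc
      have : b' ∈ comp x := by rw [hCeq]; exact ⟨lt_trans hxab.1 hxb', hc⟩
      exact hb'U (hcomp_sub x this)
    have ha'b' : a' < b' := lt_trans ha'x hxb'
    set m : ℝ := (Φ b' - Φ a') / (b' - a') with hmdef
    have hIccsub : Set.Icc a' b' ⊆ Set.Icc (0:ℝ) 1 :=
      fun y hy => ⟨le_trans ha'0 hy.1, le_trans hy.2 hb'1⟩
    set w₁ : ℝ → ℝ := (Set.Ioc (0:ℝ) 1).indicator (fun t => DΦhat t - m) with hw₁def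
    have hw₁int : Integrable w₁ volume := by
      refine IntegrableOn.integrable_indicator ?_ measurableSet_Ioc
      exact hDΦhatint.sub ((integrableOn_const_iff).mpr (Or.inr measure_Ioc_lt_top))
    have hconst1 : ∀ y ∈ Set.Icc a' b',
        (∫ t in (0:ℝ)..y, w₁ t) = Φ a' - m * a' - Φhat 0 := by
      intro y hy
      have hyI : y ∈ Set.Icc (0:ℝ) 1 := hIccsub hy
      rw [intervalIntegral.integral_of_le hyI.1]
      rw [setIntegral_congr_fun measurableSet_Ioc
        (g := fun t => DΦhat t - m)
        (fun t ht => Set.indicator_of_mem (Set.Ioc_subset_Ioc le_rfl hyI.2 ht) _)]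
      rw [integral_sub (hDΦhatint.mono_set (Set.Ioc_subset_Ioc le_rfl hyI.2))
        ((integrableOn_const_iff).mpr (Or.inr measure_Ioc_lt_top))]
      rw [setIntegral_const, Real.volume_real_Ioc_of_le hyI.1,
        smul_eq_mul]
      rw [← intervalIntegral.integral_of_le hyI.1]
      have e1 := hΦhatFTC y hyI
      have e2 := haff y hy
      have e3 : Φhat a' = Φ a' := hca'
      rw [e2] at e1
      linarith
    have hae₁ := aux_deriv_zero_on_const hw₁int measurableSet_Icc hconst1
    show ∫ p in comp x, g p ∂volume = 0
    rw [hCeq]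
    have hIooab : Set.Ioo a b ⊆ Set.Icc a' b' :=
      fun y hy => ⟨le_trans ha'a hy.1.le, le_trans hy.2.le hbb'⟩
    have hab01 : Set.Ioo a b ⊆ Set.Ioc (0:ℝ) 1 :=
      fun y hy => ⟨lt_of_le_of_lt ha0 hy.1, le_trans hy.2.le hb1⟩
    have hgae : ∀ᵐ p ∂(volume.restrict (Set.Ioo a b)),
        g p = I (lam * m) * (DΦ p - m) := by
      rw [ae_restrict_iff' measurableSet_Ioo]
      filter_upwards [hae₁] with p hp hpab
      have h1 : w₁ p = 0 := hp (hIooab hpab)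
      rw [hw₁def, Set.indicator_of_mem (hab01 hpab)] at h1
      have hDm : DΦhat p = m := by linarith [h1]
      simp only [hgdef]
      rw [hDm]
    rw [integral_congr_ae hgae]
    have hDΦab : IntegrableOn DΦ (Set.Ioo a b) volume :=
      hDΦint.mono_set hab01
    have hmint : IntegrableOn (fun _ : ℝ => m) (Set.Ioo a b) volume :=
      (integrableOn_const_iff).mpr (Or.inr measure_Ioo_lt_top)
    rw [integral_const_mul]
    have hsplit : ∫ p in Set.Ioo a b, (DΦ p - m) ∂volume
        = (∫ p in Set.Ioo a b, DΦ p ∂volume) - (b - a) * m := by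
      rw [integral_sub hDΦab hmint, setIntegral_const, Real.volume_real_Ioo_of_le hab.le,
        smul_eq_mul]
    have hΦab : ∫ p in Set.Ioo a b, DΦ p ∂volume = Φ b - Φ a := by
      rw [← integral_Ioc_eq_integral_Ioo, ← intervalIntegral.integral_of_le hab.le]
      have e1 := hΦFTC a ⟨ha0, le_trans hab.le hb1⟩
      have e2 := hΦFTC b ⟨le_trans ha0 hab.le, hb1⟩
      have hadd : (∫ p in (0:ℝ)..a, DΦ p) + ∫ p in a..b, DΦ p = ∫ p in (0:ℝ)..b, DΦ p :=
        intervalIntegral.integral_add_adjacent_intervals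
          (hII 0 a (le_refl 0) (le_trans hab.le hb1) ha0)
          (hII a b ha0 hb1 hab.le)
      linarith
    -- endpoints of the component are contact points
    have hnotU : ∀ y ∈ Set.Icc a b, y ∉ comp x → y ∉ U := by
      intro y hy hyC hyU
      obtain ⟨ε, hε, hball⟩ := Metric.isOpen_iff.mp (hcomp_open y) y (hcomp_mem y hyU)
      -- find a point of Ioo a b within ε of y
      have hay : a < b := hab
      obtain ⟨z, hzab, hzy⟩ : ∃ z, z ∈ Set.Ioo a b ∧ dist z y < ε := by
        rcases eq_or_lt_of_le hy.1 with h | h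
        · refine ⟨min (a + ε / 2) ((a + b) / 2), ⟨?_, ?_⟩, ?_⟩
          · apply lt_min (by linarith) (by linarith)
          · exact lt_of_le_of_lt (min_le_right _ _) (by linarith)
          · rw [Real.dist_eq, ← h]
            rw [abs_of_nonneg (by simp [le_min_iff]; constructor <;> linarith)]
            calc min (a + ε / 2) ((a + b) / 2) - a ≤ (a + ε / 2) - a :=
                  by linarith [min_le_left (a + ε / 2) ((a + b) / 2)]
              _ < ε := by linarith
        · rcases eq_or_lt_of_le hy.2 with h2 | h2
          · refine ⟨max (b - ε / 2) ((a + b) / 2), ⟨?_, ?_⟩, ?_⟩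
            · exact lt_of_lt_of_le (by linarith) (le_max_right _ _)
            · apply max_lt (by linarith) (by linarith)
            · rw [Real.dist_eq, h2]
              rw [abs_of_nonpos (by simp [max_le_iff]; constructor <;> linarith)]
              have := le_max_left (b - ε / 2) ((a + b) / 2)
              linarith
          · exact ⟨y, ⟨h, h2⟩, by rw [dist_self]; exact hε⟩
      have hz1 : z ∈ comp y := hball (by rwa [Metric.mem_ball])
      have hz2 : z ∈ comp x := by rw [hCeq]; exact hzab
      have : comp y = comp x :=
        (connectedComponentIn_eq hz1).trans (connectedComponentIn_eq hz2).symm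
      exact hyC (this ▸ hcomp_mem y hyU)
    have haU : a ∉ U := hnotU a ⟨le_refl a, hab.le⟩ (by rw [hCeq]; exact fun h => h.1.false)
    have hbU : b ∉ U := hnotU b ⟨hab.le, le_refl b⟩ (by rw [hCeq]; exact fun h => h.2.false)
    have hΦhata : Φhat a = Φ a := hends a haU ⟨ha0, le_trans hab.le hb1⟩
    have hΦhatb : Φhat b = Φ b := hends b hbU ⟨le_trans ha0 hab.le, hb1⟩
    have e3 : Φhat a = Φ a' + m * (a - a') := haff a ⟨ha'a, le_trans hab.le hbb'⟩
    have e4 : Φhat b = Φ a' + m * (b - a') := haff b ⟨le_trans ha'a hab.le, hbb'⟩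
    have hkey : Φ b - Φ a = m * (b - a) := by
      rw [← hΦhata, ← hΦhatb, e3, e4]
      ring
    rw [hsplit, hΦab, hkey]
    ring
  ------------------------------------------------------------------
  -- assemble
  ------------------------------------------------------------------
  have hIoc : ∫ p in Set.Ioc (0:ℝ) 1, g p = 0 := by
    rw [integral_Ioc_eq_integral_Ioo]
    have hunion : Set.Ioo (0:ℝ) 1 = s₀ ∪ U := by
      rw [hs₀def, Set.diff_union_of_subset hUsubIoo]
    rw [hunion, setIntegral_union disjoint_sdiff_left hUopen.measurableSet
      (hgint.mono_set hs₀sub) hUint]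
    rw [hint_s0, hintU]
    simp only [hcomp_zero, tsum_zero, add_zero]
  have hsubint := intervalIntegral.integral_sub hint1 hint2
  have hzero : (∫ p in (0:ℝ)..1, (I (lam * DΦhat p) * DΦ p - I (lam * DΦhat p) * DΦhat p)) = 0 := by
    rw [intervalIntegral.integral_of_le h01]
    rw [setIntegral_congr_fun measurableSet_Ioc (g := g) (fun p _ => by simp only [hgdef]; ring)]
    exact hIoc
  rw [hzero] at hsubint
  linarith
end
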